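/- Fix q > 0 and u > 0, and for α > 0 define r(α) = u·(1 + 4q/(u²·α))^{−1/2}. Then lim_{α→∞} α·[H(r(α)/(2√q)) − H(u/(2√q))] = (√q/(u·√(2π)))·e^{−u²/(8q)}. In particular, the balanced mis-classification error E(α) = H(r(α)/(2√q)) converges to its infinite-data limit H(u/(2√q)) = (1/2)·erfc(u/(2√(2q))) at rate 1/α, with leading coefficient (√q/(u√(2π)))·e^{−u²/(8q)}. -/

import Mathlib

open Real Filter MeasureTheory Set Topology

lemma gauss_integrable : MeasureTheory.Integrable (fun t : ℝ => Real.exp (-t ^ 2 / 2)) := by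
  have h := integrable_exp_neg_mul_sq (b := (1:ℝ)/2) (by norm_num)
  have e : (fun t : ℝ => Real.exp (-t ^ 2 / 2)) = fun t : ℝ => Real.exp (-((1:ℝ)/2) * t ^ 2) := by
    funext t; congr 1; ring
  rw [e]; exact h

lemma gauss_split (a b : ℝ) (hab : a ≤ b) :
    (∫ t in Ioi a, Real.exp (-t ^ 2 / 2)) =
      (∫ t in Ioi b, Real.exp (-t ^ 2 / 2)) + ∫ t in a..b, Real.exp (-t ^ 2 / 2) := by
  rw [intervalIntegral.integral_of_le hab, add_comm,
    ← MeasureTheory.setIntegral_union Set.Ioc_disjoint_Ioi_same measurableSet_Ioi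
      gauss_integrable.integrableOn gauss_integrable.integrableOn,
    Set.Ioc_union_Ioi_eq_Ioi hab]

lemma gauss_Ioi_eq (x : ℝ) :
    (∫ t in Ioi x, Real.exp (-t ^ 2 / 2)) =
      (∫ t in Ioi (0:ℝ), Real.exp (-t ^ 2 / 2)) - ∫ t in (0:ℝ)..x, Real.exp (-t ^ 2 / 2) := by
  rcases le_total 0 x with h | h
  · have := gauss_split 0 x h; linarith
  · have h2 := gauss_split x 0 h
    rw [intervalIntegral.integral_symm 0 x] at h2
    linarith

/-- Convergence rate of the balanced mis-classification error: with
r(α) = u·(1 + 4q/(u²α))^{−1/2}, one has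
α·[H(r(α)/(2√q)) − H(u/(2√q))] → (√q/(u√(2π)))·e^{−u²/(8q)} as α → ∞;
moreover the infinite-data limit satisfies H(u/(2√q)) = (1/2)·erfc(u/(2√(2q))). -/
theorem misclassification_error_convergence_rate
    (q u : ℝ) (hq : 0 < q) (hu : 0 < u)
    (H erfc : ℝ → ℝ)
    (hH : ∀ x, H x = (1 / Real.sqrt (2 * π)) * ∫ t in Set.Ioi x, Real.exp (-t ^ 2 / 2))
    (herfc : ∀ x, erfc x = (2 / Real.sqrt π) * ∫ t in Set.Ioi x, Real.exp (-t ^ 2))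
    (r : ℝ → ℝ)
    (hr : ∀ α : ℝ, 0 < α →
      r α = u * (1 + 4 * q / (u ^ 2 * α)) ^ (-(1 : ℝ) / 2)) :
    Tendsto (fun α : ℝ =>
        α * (H (r α / (2 * Real.sqrt q)) - H (u / (2 * Real.sqrt q))))
      atTop
      (nhds (Real.sqrt q / (u * Real.sqrt (2 * π)) * Real.exp (-u ^ 2 / (8 * q))))
    ∧ H (u / (2 * Real.sqrt q)) = (1 / 2) * erfc (u / (2 * Real.sqrt (2 * q))) := by
  have hsq : (0:ℝ) < Real.sqrt q := Real.sqrt_pos.mpr hq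
  have hsq' : Real.sqrt q ≠ 0 := ne_of_gt hsq
  have hqq : Real.sqrt q * Real.sqrt q = q := Real.mul_self_sqrt hq.le
  have h2π : (0:ℝ) < Real.sqrt (2 * π) := Real.sqrt_pos.mpr (by positivity)
  have hcont : Continuous fun t : ℝ => Real.exp (-t ^ 2 / 2) := by fun_prop
  -- derivative of H
  have hder : ∀ x, HasDerivAt H
      (-(1 / Real.sqrt (2 * π) * Real.exp (-x ^ 2 / 2))) x := by
    intro x
    have hrep : H = fun y =>
        (1 / Real.sqrt (2 * π)) * (∫ t in Ioi (0:ℝ), Real.exp (-t ^ 2 / 2))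
          - (1 / Real.sqrt (2 * π)) * ∫ t in (0:ℝ)..y, Real.exp (-t ^ 2 / 2) := by
      funext y
      rw [hH, gauss_Ioi_eq]; ring
    rw [hrep]
    have h := intervalIntegral.integral_hasDerivAt_right
      (hcont.intervalIntegrable 0 x)
      hcont.stronglyMeasurable.stronglyMeasurableAtFilter
      hcont.continuousAt
    exact (h.const_mul _).const_sub _
  -- the composed map
  set c : ℝ := 4 * q / u ^ 2 with hc
  set g : ℝ → ℝ := fun ε => u * (1 + c * ε) ^ (-(1:ℝ)/2) / (2 * Real.sqrt q) with hg
  have hg0 : g 0 = u / (2 * Real.sqrt q) := by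
    simp [hg, Real.one_rpow]
  have h1 : HasDerivAt (fun ε : ℝ => 1 + c * ε) c 0 := by
    simpa using ((hasDerivAt_id (0:ℝ)).const_mul c).const_add 1
  have h2 : HasDerivAt (fun y : ℝ => y ^ (-(1:ℝ)/2))
      ((-(1:ℝ)/2) * (1:ℝ) ^ ((-(1:ℝ)/2) - 1)) ((fun ε : ℝ => 1 + c * ε) 0) := by
    simpa using (Real.hasDerivAt_rpow_const (x := (1:ℝ)) (p := -(1:ℝ)/2) (Or.inl one_ne_zero))
  have hcomp : HasDerivAt (fun ε : ℝ => (1 + c * ε) ^ (-(1:ℝ)/2))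
      ((-(1:ℝ)/2) * (1:ℝ) ^ ((-(1:ℝ)/2) - 1) * c) 0 := by have := h2.comp 0 h1; exact this
  have hgd : HasDerivAt g
      (u * ((-(1:ℝ)/2) * (1:ℝ) ^ ((-(1:ℝ)/2) - 1) * c) / (2 * Real.sqrt q)) 0 :=
    (hcomp.const_mul u).div_const _
  have hφ : HasDerivAt (fun ε => H (g ε))
      (-(1 / Real.sqrt (2 * π) * Real.exp (-(g 0) ^ 2 / 2)) *
        (u * ((-(1:ℝ)/2) * (1:ℝ) ^ ((-(1:ℝ)/2) - 1) * c) / (2 * Real.sqrt q))) 0 :=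
    (hder (g 0)).comp 0 hgd
  have hE : Real.exp (-(g 0) ^ 2 / 2) = Real.exp (-u ^ 2 / (8 * q)) := by
    rw [hg0]
    congr 1
    rw [div_pow, mul_pow, Real.sq_sqrt hq.le]
    field_simp
    ring
  have hval : -(1 / Real.sqrt (2 * π) * Real.exp (-(g 0) ^ 2 / 2)) *
        (u * ((-(1:ℝ)/2) * (1:ℝ) ^ ((-(1:ℝ)/2) - 1) * c) / (2 * Real.sqrt q))
      = Real.sqrt q / (u * Real.sqrt (2 * π)) * Real.exp (-u ^ 2 / (8 * q)) := by
    rw [hE, Real.one_rpow, hc]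
    field_simp
    linear_combination
      (-(4:ℝ)) * hqq
  rw [hval] at hφ
  constructor
  · have hslope := hasDerivAt_iff_tendsto_slope.mp hφ
    have hinv : Tendsto (fun α : ℝ => α⁻¹) atTop (𝓝[≠] (0:ℝ)) :=
      tendsto_inv_atTop_nhdsGT_zero.mono_right
        (nhdsWithin_mono 0 (fun x hx => by simpa using ne_of_gt hx))
    refine (hslope.comp hinv).congr' ?_
    filter_upwards [eventually_gt_atTop (0:ℝ)] with α hα
    have hα' : α ≠ 0 := ne_of_gt hα
    have hce : c * α⁻¹ = 4 * q / (u ^ 2 * α) := by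
      rw [hc]; field_simp
    have harg : r α / (2 * Real.sqrt q) = g α⁻¹ := by
      rw [hr α hα, hg]
      simp only
      rw [← hce]
    simp only [Function.comp_apply]
    rw [harg, ← hg0, slope_def_field, sub_zero, div_eq_mul_inv, inv_inv, mul_comm]
  · rw [hH, herfc]
    have hs2 : (0:ℝ) < Real.sqrt 2 := Real.sqrt_pos.mpr (by norm_num)
    have h2q : Real.sqrt (2 * q) = Real.sqrt 2 * Real.sqrt q :=
      Real.sqrt_mul (by norm_num) q
    have key : (∫ t in Ioi (u / (2 * Real.sqrt q)), Real.exp (-t ^ 2 / 2))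
        = Real.sqrt 2 * ∫ t in Ioi (u / (2 * Real.sqrt (2 * q))), Real.exp (-t ^ 2) := by
      have hsub := MeasureTheory.integral_comp_mul_left_Ioi
        (fun t : ℝ => Real.exp (-t ^ 2 / 2)) (u / (2 * Real.sqrt (2 * q))) hs2
      have e1 : ∀ x : ℝ, Real.exp (-(Real.sqrt 2 * x) ^ 2 / 2) = Real.exp (-x ^ 2) := by
        intro x; congr 1
        rw [mul_pow, Real.sq_sqrt (by norm_num : (0:ℝ) ≤ 2)]; ring
      simp only [e1, smul_eq_mul] at hsub
      have e2 : Real.sqrt 2 * (u / (2 * Real.sqrt (2 * q))) = u / (2 * Real.sqrt q) := by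
        rw [h2q]; field_simp
      rw [e2] at hsub
      rw [hsub, ← mul_assoc, mul_inv_cancel₀ (ne_of_gt hs2), one_mul]
    rw [key]
    have hsπ : Real.sqrt (2 * π) = Real.sqrt 2 * Real.sqrt π :=
      Real.sqrt_mul (by norm_num) π
    have hπ0 : Real.sqrt π ≠ 0 := ne_of_gt (Real.sqrt_pos.mpr Real.pi_pos)
    rw [hsπ]
    field_simp
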